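/- arXiv:2202.03027 — 2 statements merged into one kernel-verified Lean document; each statement's English description precedes it below -/
import Mathlib

section
/- Let (L,A) be a Seifert form with det(A) = ±1, and define t : L ⊗ Q → L ⊗ Q by A(tx,y) = -A(y,x) for all x,y. Then t preserves L, t is an isometry of the symmetric form S(x,y) = A(x,y) + A(y,x), and the characteristic polynomial of t equals det(A)·Δ_A. -/
open Matrix Polynomial

lemma mapQ_mul {r : ℕ} (A B : Matrix (Fin r) (Fin r) ℤ) :
    ((A * B).map ((↑) : ℤ → ℚ)) = A.map ((↑) : ℤ → ℚ) * B.map ((↑) : ℤ → ℚ) := by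
  ext i j
  simp [Matrix.mul_apply, Matrix.map_apply]

lemma mapQ_one {r : ℕ} : ((1 : Matrix (Fin r) (Fin r) ℤ).map ((↑) : ℤ → ℚ)) = 1 := by
  ext i j
  by_cases h : i = j <;> simp [Matrix.one_apply, Matrix.map_apply, h]


/-- let `(L,A)` be a Seifert form with Gram matrix `M` of determinant `±1`
(and unimodular symmetrization), and let `t = -M⁻¹Mᵀ` (over `ℚ`), so that
`A(tx,y) = -A(y,x)`.  Then `t` has integer entries (preserves `L`), `t` is an isometry of
the symmetric form `S = M + Mᵀ`, and the characteristic polynomial of `t` equals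
`det(M) · Δ_A`, where `Δ_A(X) = det(MX + Mᵀ)`. -/
theorem unimodular_seifert_isometry
    (r : ℕ) (M : Matrix (Fin r) (Fin r) ℤ)
    (hdetM : M.det = 1 ∨ M.det = -1)
    (hunimod : (M + Mᵀ).det = 1 ∨ (M + Mᵀ).det = -1)
    (t : Matrix (Fin r) (Fin r) ℚ)
    (ht : t = -((M.map ((↑) : ℤ → ℚ))⁻¹ * (M.map ((↑) : ℤ → ℚ))ᵀ))
    (Δ : Polynomial ℤ)
    (hΔ : Δ = ((X : Polynomial ℤ) • M.map C + Mᵀ.map C).det) :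
    (∃ tZ : Matrix (Fin r) (Fin r) ℤ, tZ.map ((↑) : ℤ → ℚ) = t) ∧
    tᵀ * (M + Mᵀ).map ((↑) : ℤ → ℚ) * t = (M + Mᵀ).map ((↑) : ℤ → ℚ) ∧
    t.charpoly = C ((M.det : ℚ)) * Δ.map (Int.castRingHom ℚ) := by
  set N : Matrix (Fin r) (Fin r) ℚ := M.map ((↑) : ℤ → ℚ) with hN
  have hdetN : N.det = (M.det : ℚ) := by
    rw [hN, show ((↑) : ℤ → ℚ) = ⇑(Int.castRingHom ℚ) from rfl,
      ← RingHom.mapMatrix_apply, ← RingHom.map_det]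
  have hdN : N.det = 1 ∨ N.det = -1 := by
    rcases hdetM with h | h <;> simp [hdetN, h]
  have hUN : IsUnit N.det := by rcases hdN with h | h <;> simp [h]
  have hUNT : IsUnit Nᵀ.det := by rwa [det_transpose]
  have hUM : IsUnit M.det := Int.isUnit_iff.mpr hdetM
  have hNinv : N⁻¹ = M⁻¹.map ((↑) : ℤ → ℚ) := by
    refine Matrix.inv_eq_right_inv ?_
    rw [hN, ← mapQ_mul, Matrix.mul_nonsing_inv _ hUM, mapQ_one]
  refine ⟨⟨-(M⁻¹ * Mᵀ), ?_⟩, ?_, ?_⟩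
  · rw [ht, show (-(M⁻¹ * Mᵀ)).map ((↑) : ℤ → ℚ) = -((M⁻¹ * Mᵀ).map ((↑) : ℤ → ℚ)) by
      ext i j; simp [Matrix.map_apply]]
    rw [mapQ_mul, ← hNinv, Matrix.transpose_map]
  · have hmap : (M + Mᵀ).map ((↑) : ℤ → ℚ) = N + Nᵀ := by
      ext i j; simp [hN, Matrix.map_apply]
    rw [ht, hmap]
    haveI : Invertible N := N.invertibleOfIsUnitDet hUN
    haveI : Invertible Nᵀ := Nᵀ.invertibleOfIsUnitDet hUNT
    have e1 : (-(N⁻¹ * Nᵀ))ᵀ = -(N * (Nᵀ)⁻¹) := by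
      rw [transpose_neg, transpose_mul, transpose_transpose,
        Matrix.transpose_nonsing_inv]
    rw [e1]
    simp only [neg_mul, mul_neg, neg_neg]
    simp [Matrix.mul_add, Matrix.add_mul, Matrix.mul_assoc,
      Matrix.mul_inv_cancel_left_of_invertible, Matrix.inv_mul_cancel_left_of_invertible,
      Matrix.inv_mul_of_invertible, Matrix.mul_inv_of_invertible, add_comm]
  · have hfactor : t.charpoly =
        (N⁻¹.map Polynomial.C * ((X : ℚ[X]) • N.map Polynomial.C + Nᵀ.map Polynomial.C)).det := by
      rw [Matrix.charpoly]
      congr 1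
      rw [Matrix.mul_add, mul_smul_comm, ← Matrix.map_mul,
        Matrix.nonsing_inv_mul _ hUN, ← Matrix.map_mul, charmatrix]
      rw [ht]
      ext i j : 2
      by_cases h : i = j <;>
        simp [h, Matrix.map_apply, Matrix.smul_apply, Matrix.one_apply, Matrix.scalar_apply,
          Matrix.diagonal_apply, sub_eq_add_neg, Matrix.mul_apply, map_sum]
    rw [hfactor, Matrix.det_mul]
    have h1 : (N⁻¹.map Polynomial.C).det = Polynomial.C ((M.det : ℚ)) := by
      rw [show N⁻¹.map ⇑Polynomial.C = (Polynomial.C : ℚ →+* ℚ[X]).mapMatrix N⁻¹ from rfl,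
        ← RingHom.map_det, Matrix.det_nonsing_inv, hdetN]
      congr 1
      rcases hdetM with h | h <;> norm_num [h, Ring.inverse_eq_inv']
    have h2 : ((X : ℚ[X]) • N.map Polynomial.C + Nᵀ.map Polynomial.C).det
        = Δ.map (Int.castRingHom ℚ) := by
      rw [hΔ, show (Polynomial.map (Int.castRingHom ℚ)) = ⇑(Polynomial.mapRingHom (Int.castRingHom ℚ)) from rfl]
      rw [RingHom.map_det]
      congr 1
      ext i j
      simp [RingHom.mapMatrix_apply, Matrix.map_apply, Matrix.smul_apply, hN,
        Matrix.transpose_apply]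
    rw [h1, h2]
end

section
/- Let (L,A) be a Seifert form with det(A) = ±1 and t = -M^{-1}M^T (M a Gram matrix of A). Then sending (L,A) to (L, S, t), with S = A + A^T, is injective up to isomorphism: two unimodular Seifert forms (L,A) and (L',A') are isomorphic if and only if the associated triples (L,S,t) and (L',S',t') are isomorphic as lattices with isometry. -/
open Matrix

/-- two unimodular Seifert forms, given by Gram matrices `M` and `M'` of
determinant `±1` (with unimodular symmetrizations), are isomorphic (congruent over `ℤ`)
if and only if the associated triples `(L, S, t)` and `(L', S', t')`, with `S = M + Mᵀ`
and `t = -M⁻¹Mᵀ`, are isomorphic as lattices with isometry. -/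
theorem unimodular_seifert_forms_iso_iff_triples_iso
    (r : ℕ) (M M' : Matrix (Fin r) (Fin r) ℤ)
    (hdetM : M.det = 1 ∨ M.det = -1)
    (hdetM' : M'.det = 1 ∨ M'.det = -1)
    (hunimod : (M + Mᵀ).det = 1 ∨ (M + Mᵀ).det = -1)
    (hunimod' : (M' + M'ᵀ).det = 1 ∨ (M' + M'ᵀ).det = -1)
    (t t' : Matrix (Fin r) (Fin r) ℤ)
    (ht : t = -(M⁻¹ * Mᵀ)) (ht' : t' = -(M'⁻¹ * M'ᵀ)) :
    (∃ U : Matrix (Fin r) (Fin r) ℤ, IsUnit U.det ∧ Uᵀ * M' * U = M) ↔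
    (∃ U : Matrix (Fin r) (Fin r) ℤ, IsUnit U.det ∧
        Uᵀ * (M' + M'ᵀ) * U = M + Mᵀ ∧ t = U⁻¹ * t' * U) := by
  have hM : IsUnit M.det := by rcases hdetM with h | h <;> simp [h]
  have hM' : IsUnit M'.det := by rcases hdetM' with h | h <;> simp [h]
  have hS : IsUnit (M + Mᵀ).det := by rcases hunimod with h | h <;> simp [h]
  have hS' : IsUnit (M' + M'ᵀ).det := by rcases hunimod' with h | h <;> simp [h]
  -- key identities: M * (1 - t) = M + Mᵀ
  have key : M * (1 - t) = M + Mᵀ := by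
    rw [ht, mul_sub, mul_one, mul_neg, ← Matrix.mul_assoc,
      Matrix.mul_nonsing_inv M hM, Matrix.one_mul, sub_neg_eq_add]
  have key' : M' * (1 - t') = M' + M'ᵀ := by
    rw [ht', mul_sub, mul_one, mul_neg, ← Matrix.mul_assoc,
      Matrix.mul_nonsing_inv M' hM', Matrix.one_mul, sub_neg_eq_add]
  have h1t : IsUnit (1 - t).det := by
    have := congrArg Matrix.det key
    rw [Matrix.det_mul] at this
    exact isUnit_of_mul_isUnit_right (this ▸ hS)
  have h1t' : IsUnit (1 - t').det := by
    have := congrArg Matrix.det key'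
    rw [Matrix.det_mul] at this
    exact isUnit_of_mul_isUnit_right (this ▸ hS')
  constructor
  · rintro ⟨U, hU, hUM⟩
    refine ⟨U, hU, ?_, ?_⟩
    · have : Uᵀ * (M' + M'ᵀ) * U = Uᵀ * M' * U + (Uᵀ * M' * U)ᵀ := by
        simp [Matrix.mul_add, Matrix.add_mul, Matrix.transpose_mul, Matrix.mul_assoc]
      rw [this, hUM]
    · have hUt : IsUnit Uᵀ.det := by rwa [Matrix.det_transpose]
      have h2 : (Uᵀ * M' * U)⁻¹ * (Uᵀ * M' * U)ᵀ = U⁻¹ * (M'⁻¹ * M'ᵀ) * U := by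
        rw [Matrix.mul_inv_rev, Matrix.mul_inv_rev, Matrix.transpose_mul,
          Matrix.transpose_mul, Matrix.transpose_transpose]
        simp only [Matrix.mul_assoc]
        rw [Matrix.nonsing_inv_mul_cancel_left _ _ hUt]
      rw [ht, ht', ← hUM, h2]
      simp only [Matrix.mul_neg, Matrix.neg_mul]
  · rintro ⟨U, hU, hUS, htt⟩
    refine ⟨U, hU, ?_⟩
    -- (Uᵀ M' U)(1 - t) = Uᵀ S' U = S = M (1 - t), then cancel (1 - t)
    have hcalc : (Uᵀ * M' * U) * (1 - t) = M * (1 - t) := by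
      rw [key, ← hUS]
      have h1 : 1 - t = U⁻¹ * (1 - t') * U := by
        rw [htt, Matrix.mul_sub, Matrix.sub_mul, Matrix.mul_one,
          Matrix.nonsing_inv_mul _ hU]
      rw [h1]
      calc Uᵀ * M' * U * (U⁻¹ * (1 - t') * U)
          = Uᵀ * M' * (U * U⁻¹) * (1 - t') * U := by
            simp only [Matrix.mul_assoc]
        _ = Uᵀ * (M' * (1 - t')) * U := by
            rw [Matrix.mul_nonsing_inv _ hU]; simp [Matrix.mul_assoc]
        _ = Uᵀ * (M' + M'ᵀ) * U := by rw [key']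
    calc Uᵀ * M' * U = (Uᵀ * M' * U) * (1 - t) * (1 - t)⁻¹ := by
          rw [Matrix.mul_assoc (Uᵀ * M' * U), Matrix.mul_nonsing_inv _ h1t, Matrix.mul_one]
      _ = M * (1 - t) * (1 - t)⁻¹ := by rw [hcalc]
      _ = M := by rw [Matrix.mul_assoc M, Matrix.mul_nonsing_inv _ h1t, Matrix.mul_one]
end
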